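/- Let Γ be a connected μ-uniform graph and suppose there is a function f: V(Γ) → ℝ such that (i) |∇_{xy} f| ≤ c₁ for every edge xy ∈ E(Γ), and (ii) (Δf)(x) ≥ c₂ > 0 for every vertex x ∈ V(Γ). Then h(Γ) ≥ c₂/(μ c₁) > 0. -/
import Mathlib


open scoped ENNReal

namespace TreePaper

variable {V : Type*}

/-- The (outer) vertex boundary `∂A = {w : d(w,A) = 1}` of a set of vertices. -/
def vboundary (G : SimpleGraph V) (A : Set V) : Set V :=
  {w | w ∉ A ∧ ∃ a ∈ A, G.Adj w a}

/-- The ratio `|∂A| / |A|`, valued in `ℝ≥0∞`. -/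
noncomputable def eratio (G : SimpleGraph V) (A : Finset V) : ℝ≥0∞ :=
  ((vboundary G (A : Set V)).encard : ℝ≥0∞) / (A.card : ℝ≥0∞)

/-- The Cheeger isoperimetric constant `h(Γ) = inf_A |∂A|/|A|`, the infimum over all
non-empty finite subsets of vertices. -/
noncomputable def cheeger (G : SimpleGraph V) : ℝ≥0∞ :=
  ⨅ (A : Finset V) (_ : A.Nonempty), eratio G A

/-- The discrete Laplacian `(Δf)(x) = (1/|N(x)|) ∑_{y ∈ N(x)} (f(y) - f(x))`. -/
noncomputable def lap (G : SimpleGraph V) [DecidableRel G.Adj] [G.LocallyFinite]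
    (f : V → ℝ) (x : V) : ℝ :=
  ((G.degree x : ℝ))⁻¹ * ∑ y ∈ G.neighborFinset x, (f y - f x)

/-- Let `Γ` be a connected `μ`-uniform graph and `f : V → ℝ` a function
with `|∇_{xy} f| ≤ c₁` on every edge and `(Δf)(x) ≥ c₂ > 0` at every vertex.
Then `h(Γ) ≥ c₂/(μ c₁) > 0`. -/
theorem cheeger_ge_of_gradient_laplacian (G : SimpleGraph V) [DecidableRel G.Adj]
    [G.LocallyFinite] (hconn : G.Connected)
    (μ : ℕ) (hμ : ∀ x : V, G.degree x ≤ μ)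
    (f : V → ℝ) (c₁ c₂ : ℝ) (hc₂ : 0 < c₂)
    (hgrad : ∀ x y : V, G.Adj x y → |f y - f x| ≤ c₁)
    (hlap : ∀ x : V, c₂ ≤ lap G f x) :
    ENNReal.ofReal (c₂ / (μ * c₁)) ≤ cheeger G ∧ 0 < ENNReal.ofReal (c₂ / (μ * c₁)) := by
  classical
  obtain ⟨x₀⟩ := hconn.nonempty
  -- every vertex has positive degree
  have hdegpos : ∀ x : V, 0 < G.degree x := by
    intro x
    rcases Nat.eq_zero_or_pos (G.degree x) with h | h
    · exfalso
      have hN : G.neighborFinset x = ∅ := Finset.card_eq_zero.mp h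
      have : lap G f x = 0 := by simp [lap, hN]
      linarith [hlap x]
    · exact h
  -- key per-vertex inequality: c₂ * deg x ≤ ∑ (f y - f x)
  have hkey : ∀ x : V, c₂ * (G.degree x : ℝ) ≤ ∑ y ∈ G.neighborFinset x, (f y - f x) := by
    intro x
    have hd : (0:ℝ) < (G.degree x : ℝ) := by exact_mod_cast hdegpos x
    have := hlap x
    rw [lap, inv_mul_eq_div, le_div_iff₀ hd] at this
    linarith
  -- c₁ ≥ c₂ > 0
  have hc₁ : c₂ ≤ c₁ := by
    have hd : (0:ℝ) < (G.degree x₀ : ℝ) := by exact_mod_cast hdegpos x₀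
    have h1 : ∑ y ∈ G.neighborFinset x₀, (f y - f x₀) ≤ (G.degree x₀ : ℝ) * c₁ := by
      rw [SimpleGraph.degree]
      calc ∑ y ∈ G.neighborFinset x₀, (f y - f x₀)
          ≤ ∑ y ∈ G.neighborFinset x₀, c₁ := by
            refine Finset.sum_le_sum fun y hy => ?_
            exact le_trans (le_abs_self _) (hgrad x₀ y ((SimpleGraph.mem_neighborFinset _ _ _).mp hy))
        _ = (G.neighborFinset x₀).card * c₁ := by rw [Finset.sum_const, nsmul_eq_mul]
    nlinarith [hkey x₀]
  have hc₁pos : (0:ℝ) < c₁ := lt_of_lt_of_le hc₂ hc₁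
  have hμpos : 0 < μ := lt_of_lt_of_le (hdegpos x₀) (hμ x₀)
  have hμc₁ : (0:ℝ) < (μ:ℝ) * c₁ := by positivity
  constructor
  · -- main bound
    refine le_iInf fun A => le_iInf fun hA => ?_
    set B : Finset V := (A.biUnion fun a => G.neighborFinset a) \ A with hB
    have hbd : vboundary G (A : Set V) = (B : Set V) := by
      ext w
      simp only [vboundary, Set.mem_setOf_eq, hB, Finset.coe_sdiff, Set.mem_diff,
        Finset.coe_biUnion, Set.mem_iUnion, Finset.mem_coe, SimpleGraph.mem_neighborFinset]
      constructor
      · rintro ⟨hw, a, ha, hadj⟩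
        exact ⟨⟨a, ha, hadj.symm⟩, hw⟩
      · rintro ⟨⟨a, ha, hadj⟩, hw⟩
        exact ⟨hw, a, ha, hadj.symm⟩
    -- real inequality: c₂ * |A| ≤ μ c₁ * |B|
    have hAB : c₂ * (A.card : ℝ) ≤ (μ:ℝ) * c₁ * (B.card : ℝ) := by
      -- step 1: sum of per-vertex inequality
      have h1 : c₂ * (A.card : ℝ) ≤ ∑ x ∈ A, ∑ y ∈ G.neighborFinset x, (f y - f x) := by
        calc c₂ * (A.card : ℝ) = ∑ _x ∈ A, c₂ := by rw [Finset.sum_const, nsmul_eq_mul]; ring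
          _ ≤ ∑ x ∈ A, c₂ * (G.degree x : ℝ) := by
              refine Finset.sum_le_sum fun x _ => ?_
              have : (1:ℝ) ≤ (G.degree x : ℝ) := by exact_mod_cast hdegpos x
              nlinarith
          _ ≤ _ := Finset.sum_le_sum fun x _ => hkey x
      -- step 2: split inner sum, internal part cancels
      have hsplit : ∀ x ∈ A, ∑ y ∈ G.neighborFinset x, (f y - f x)
          = (∑ y ∈ A, if G.Adj x y then f y - f x else 0)
            + ∑ y ∈ B, if G.Adj x y then f y - f x else 0 := by
        intro x hx
        have hdisj : Disjoint (G.neighborFinset x ∩ A) (G.neighborFinset x \ A) :=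
          Finset.disjoint_of_subset_left (Finset.inter_subset_right)
            (Finset.sdiff_disjoint.symm)
        have hun : (G.neighborFinset x ∩ A) ∪ (G.neighborFinset x \ A) = G.neighborFinset x := by
          ext y; simp only [Finset.mem_union, Finset.mem_inter, Finset.mem_sdiff]; tauto
        rw [← hun, Finset.sum_union hdisj]
        congr 1
        · rw [← Finset.sum_filter]
          congr 1
          ext y
          simp [SimpleGraph.mem_neighborFinset, and_comm]
        · rw [← Finset.sum_filter]
          congr 1
          ext y
          simp only [Finset.mem_sdiff, SimpleGraph.mem_neighborFinset, Finset.mem_filter, hB,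
            Finset.mem_biUnion]
          constructor
          · rintro ⟨hadj, hy⟩
            exact ⟨⟨⟨x, hx, hadj⟩, hy⟩, hadj⟩
          · rintro ⟨⟨_, hy⟩, hadj⟩
            exact ⟨hadj, hy⟩
      have hcancel : ∑ x ∈ A, ∑ y ∈ A, (if G.Adj x y then f y - f x else 0) = 0 := by
        have := Finset.sum_comm (s := A) (t := A)
          (f := fun x y => if G.Adj x y then f y - f x else 0)
        have h2 : ∑ x ∈ A, ∑ y ∈ A, (if G.Adj x y then f y - f x else 0)
            = - ∑ x ∈ A, ∑ y ∈ A, (if G.Adj x y then f y - f x else 0) := by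
          conv_lhs => rw [this]
          rw [← Finset.sum_neg_distrib]
          refine Finset.sum_congr rfl fun y _ => ?_
          rw [← Finset.sum_neg_distrib]
          refine Finset.sum_congr rfl fun x _ => ?_
          by_cases h : G.Adj x y
          · have h' : G.Adj y x := h.symm
            simp only [h, h', if_true]
            ring
          · have h' : ¬ G.Adj y x := fun h' => h h'.symm
            simp [h, h']
        linarith
      have h3 : ∑ x ∈ A, ∑ y ∈ G.neighborFinset x, (f y - f x)
          = ∑ x ∈ A, ∑ y ∈ B, if G.Adj x y then f y - f x else 0 := by
        rw [Finset.sum_congr rfl hsplit, Finset.sum_add_distrib, hcancel, zero_add]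
      -- step 3: bound the boundary part
      have h4 : ∑ x ∈ A, ∑ y ∈ B, (if G.Adj x y then f y - f x else 0)
          ≤ (B.card : ℝ) * ((μ:ℝ) * c₁) := by
        rw [Finset.sum_comm]
        calc ∑ y ∈ B, ∑ x ∈ A, (if G.Adj x y then f y - f x else 0)
            ≤ ∑ y ∈ B, ∑ x ∈ A, (if G.Adj x y then c₁ else 0) := by
              refine Finset.sum_le_sum fun y _ => Finset.sum_le_sum fun x _ => ?_
              by_cases h : G.Adj x y
              · simpa [h] using le_trans (le_abs_self _) (hgrad x y h)
              · simp [h]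
          _ ≤ ∑ _y ∈ B, (μ:ℝ) * c₁ := by
              refine Finset.sum_le_sum fun y _ => ?_
              rw [← Finset.sum_filter, Finset.sum_const, nsmul_eq_mul]
              have hsub : (A.filter fun x => G.Adj x y) ⊆ G.neighborFinset y := by
                intro x hx
                simp only [Finset.mem_filter] at hx
                exact (SimpleGraph.mem_neighborFinset _ _ _).mpr hx.2.symm
              have hcard : (((A.filter fun x => G.Adj x y)).card : ℝ) ≤ (μ:ℝ) := by
                exact_mod_cast le_trans (Finset.card_le_card hsub) (hμ y)
              nlinarith
          _ = (B.card : ℝ) * ((μ:ℝ) * c₁) := by rw [Finset.sum_const, nsmul_eq_mul]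
      calc c₂ * (A.card : ℝ) ≤ _ := h1
        _ = _ := h3
        _ ≤ (B.card : ℝ) * ((μ:ℝ) * c₁) := h4
        _ = (μ:ℝ) * c₁ * (B.card : ℝ) := by ring
    -- convert to ENNReal
    have hApos : (0:ℝ) < (A.card : ℝ) := by exact_mod_cast Finset.card_pos.mpr hA
    have hreal : c₂ / ((μ:ℝ) * c₁) ≤ (B.card : ℝ) / (A.card : ℝ) := by
      rw [div_le_div_iff₀ hμc₁ hApos]
      linarith
    rw [eratio, hbd, Set.encard_coe_eq_coe_finsetCard]
    calc ENNReal.ofReal (c₂ / (μ * c₁)) ≤ ENNReal.ofReal ((B.card : ℝ) / (A.card : ℝ)) :=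
          ENNReal.ofReal_le_ofReal hreal
      _ = (B.card : ℝ≥0∞) / (A.card : ℝ≥0∞) := by
          rw [ENNReal.ofReal_div_of_pos hApos, ENNReal.ofReal_natCast, ENNReal.ofReal_natCast]
  · rw [ENNReal.ofReal_pos]
    positivity


end TreePaper
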